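/- For a single split A|B of [n] with both parts contiguous in a circular order c, the split pseudometric δ(i,j) = 1 if the split separates i and j, 0 otherwise, satisfies the Kalmanson condition with respect to c: for every quadruple (i,j,k,l) in circular position in c, max{δ(i,j)+δ(k,l), δ(j,k)+δ(i,l)} ≤ δ(i,k)+δ(j,l). -/

import Mathlib

open Fin.NatCast in
/-- A subset of Fin n is contiguous (an arc) with respect to the circular order
given by a permutation σ, read cyclically. -/
def IsContiguous (n : ℕ) [NeZero n] (σ : Equiv.Perm (Fin n))
    (A : Finset (Fin n)) : Prop :=
  ∃ (a : Fin n) (m : ℕ),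
    A = (Finset.range m).image (fun t : ℕ => σ (a + (t : Fin n)))

/-!
The split pseudometric of `A|Aᶜ` only sees, for each point, on which side of the split it lies.
Checking the sixteen side patterns of a quadruple shows that the Kalmanson inequality can only
fail when the quadruple alternates between the two sides, `A, Aᶜ, A, Aᶜ` or `Aᶜ, A, Aᶜ, A`.
An arc of the circular order is a threshold set `{x | (x - a) mod n < m}` of a rotation, and a
rotation turns the increasing quadruple `p < q < r < s` into a cyclic shift of an increasing one,
which a threshold cannot cut into four alternating pieces.
-/

section SplitDist

variable {α : Type*} (P : α → Prop) [DecidablePred P]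

def splitDist (u v : α) : ℝ := if (P u ↔ P v) then 0 else 1

def Alternates (w x y z : α) : Prop :=
  (P w ∧ ¬P x ∧ P y ∧ ¬P z) ∨ (¬P w ∧ P x ∧ ¬P y ∧ P z)

theorem max_splitDist_add_le_of_not_alternates {w x y z : α} (h : ¬Alternates P w x y z) :
    max (splitDist P w x + splitDist P y z) (splitDist P x y + splitDist P w z) ≤
      splitDist P w y + splitDist P x z := by
  unfold Alternates at h
  unfold splitDist
  by_cases hw : P w <;> by_cases hx : P x <;> by_cases hy : P y <;> by_cases hz : P z <;>
    simp_all

end SplitDist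

theorem not_alternates_sub_val_lt {n : ℕ} (a : Fin n) (m : ℕ) {p q r s : Fin n}
    (hpq : p < q) (hqr : q < r) (hrs : r < s) :
    ¬Alternates (fun x : Fin n => (x - a).val < m) p q r s := by
  have rotate : ∀ x : Fin n,
      (a ≤ x ∧ (x - a).val = x.val - a.val) ∨ (x < a ∧ (x - a).val = n + x.val - a.val) :=
    fun x => (le_or_gt a x).imp (fun h => ⟨h, Fin.coe_sub_iff_le.2 h⟩)
      (fun h => ⟨h, Fin.coe_sub_iff_lt.2 h⟩)
  rw [Fin.lt_def] at hpq hqr hrs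
  simp only [Alternates, Fin.le_def, Fin.lt_def] at rotate ⊢
  have := s.isLt
  rcases rotate p with ⟨_, hp⟩ | ⟨_, hp⟩ <;> rcases rotate q with ⟨_, hq⟩ | ⟨_, hq⟩ <;>
    rcases rotate r with ⟨_, hr⟩ | ⟨_, hr⟩ <;> rcases rotate s with ⟨_, hs⟩ | ⟨_, hs⟩ <;>
    omega

open Fin.NatCast in
theorem apply_mem_image_add_natCast_iff {n : ℕ} [NeZero n] {σ : Equiv.Perm (Fin n)}
    {A : Finset (Fin n)} {a : Fin n} {m : ℕ}
    (hA : A = (Finset.range m).image (fun t : ℕ => σ (a + (t : Fin n)))) (x : Fin n) :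
    σ x ∈ A ↔ (x - a).val < m := by
  simp only [hA, Finset.mem_image, Finset.mem_range, σ.injective.eq_iff]
  constructor
  · rintro ⟨t, ht, rfl⟩
    rw [add_sub_cancel_left, Fin.val_natCast]
    exact (Nat.mod_le t n).trans_lt ht
  · intro h
    exact ⟨(x - a).val, h, by rw [Fin.cast_val_eq_self, add_sub_cancel]⟩

theorem stmt_12_general (n : ℕ) [NeZero n] (σ : Equiv.Perm (Fin n))
    (A : Finset (Fin n))
    (hc : IsContiguous n σ A)
    (δ : Fin n → Fin n → ℝ)
    (hδ : ∀ i j, δ i j = if ((i ∈ A) ↔ (j ∈ A)) then 0 else 1) :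
    ∀ p q r s : Fin n, p < q → q < r → r < s →
      max (δ (σ p) (σ q) + δ (σ r) (σ s)) (δ (σ q) (σ r) + δ (σ p) (σ s)) ≤
        δ (σ p) (σ r) + δ (σ q) (σ s) := by
  intro p q r s hpq hqr hrs
  obtain ⟨a, m, hA⟩ := hc
  have hδσ : ∀ i j, δ (σ i) (σ j) = splitDist (fun x => σ x ∈ A) i j := fun i j => hδ _ _
  have hside : (fun x => σ x ∈ A) = fun x => (x - a).val < m :=
    funext fun x => propext (apply_mem_image_add_natCast_iff hA x)
  simp only [hδσ]
  apply max_splitDist_add_le_of_not_alternates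
  rw [hside]
  exact not_alternates_sub_val_lt a m hpq hqr hrs

/-- For a single split A|Aᶜ of Fin n with both parts nonempty and contiguous in the
circular order σ, the split pseudometric δ(i,j) = 1 if the split separates i and j,
0 otherwise, satisfies the Kalmanson condition with respect to σ. -/
theorem stmt_12 (n : ℕ) [NeZero n] (σ : Equiv.Perm (Fin n))
    (A : Finset (Fin n)) (hA : A.Nonempty) (hA' : Aᶜ.Nonempty)
    (hc : IsContiguous n σ A) (hc' : IsContiguous n σ Aᶜ)
    (δ : Fin n → Fin n → ℝ)
    (hδ : ∀ i j, δ i j = if ((i ∈ A) ↔ (j ∈ A)) then 0 else 1) :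
    ∀ p q r s : Fin n, p < q → q < r → r < s →
      max (δ (σ p) (σ q) + δ (σ r) (σ s)) (δ (σ q) (σ r) + δ (σ p) (σ s)) ≤
        δ (σ p) (σ r) + δ (σ q) (σ s) :=
  stmt_12_general n σ A hc δ hδ
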